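/- Let h', h'' be i.i.d. Exp(1) random variables, I ≥ 0 independent of them, θ ≥ 0 and μ ∈ [0,1] with θμ < 1. Then P(min(h',h'')/(I + μ·max(h',h'')) > θ) = ((1−θμ)/(1+θμ))·E[exp(−(2θ/(1−θμ))I)]. If θμ ≥ 1 this probability is 0. -/

import Mathlib

/-!
Fix `I` and put `c = θ I`, `d = θ μ`. On `{h' ≤ h''}` the event is `c + d h'' < h' ≤ h''`, whose
probability given `h'' = y` is `(e^{-(c + d y)} - e^{-y})⁺`; the positive part lives on
`y > c / (1 - d)`, and integrating against `e^{-y}` there gives `(1 - d) / (2 (1 + d)) e^{-2c/(1-d)}`.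
The case `h'' < h'` contributes the same amount, and averaging over the independent `I` gives the
formula. If `d ≥ 1` then `c + d max ≥ max ≥ min` as soon as the gains are nonnegative, so the event
is null.
-/

open MeasureTheory ProbabilityTheory Real Set

namespace ProbabilityTheory

instance nullSingletonClass_expMeasure (r : ℝ) : NullSingletonClass (expMeasure r) :=
  inferInstanceAs (NullSingletonClass (volume.withDensity (gammaPDF 1 r)))

lemma expMeasure_eq_withDensity (r : ℝ) :
    expMeasure r = volume.withDensity (exponentialPDF r) := rfl

lemma expMeasure_Iio_zero {r : ℝ} (hr : 0 < r) : expMeasure r (Iio 0) = 0 := by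
  have := isProbabilityMeasure_expMeasure hr
  refine measure_mono_null Iio_subset_Iic_self ?_
  rw [← ofReal_cdf, cdf_expMeasure_eq hr]
  simp

lemma expMeasure_Ioc {r a b : ℝ} (hr : 0 < r) (ha : 0 ≤ a) (hb : 0 ≤ b) :
    expMeasure r (Ioc a b) = ENNReal.ofReal (exp (-(r * a)) - exp (-(r * b))) := by
  have := isProbabilityMeasure_expMeasure hr
  rw [← measure_cdf (expMeasure r), StieltjesFunction.measure_Ioc, cdf_expMeasure_eq hr,
    cdf_expMeasure_eq hr, if_pos ha, if_pos hb, sub_sub_sub_cancel_left]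

lemma integral_exp_neg_mul_sub_exp_neg_two_mul_Ioi {c d : ℝ} (hd : -1 < d) (hd1 : d ≠ 1) :
    ∫ y in Ioi (c / (1 - d)), (exp (-c) * exp (-(1 + d) * y) - exp (-2 * y)) =
      (1 - d) / (2 * (1 + d)) * exp (-(2 * c / (1 - d))) := by
  have h1d : 1 - d ≠ 0 := sub_ne_zero.mpr hd1.symm
  have h1d' : 1 + d ≠ 0 := by linarith
  rw [integral_sub ((exp_neg_integrableOn_Ioi _ (by linarith)).const_mul _)
      (exp_neg_integrableOn_Ioi _ two_pos), integral_const_mul,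
    integral_exp_mul_Ioi (by linarith), integral_exp_mul_Ioi (by norm_num), neg_div, mul_neg,
    mul_div_assoc']
  have hmerge : exp (-c) * exp (-(1 + d) * (c / (1 - d))) = exp (-(2 * c / (1 - d))) := by
    rw [← exp_add]
    congr 1
    field_simp
    ring
  rw [hmerge, show -2 * (c / (1 - d)) = -(2 * c / (1 - d)) by ring]
  field_simp
  ring

lemma exponentialPDF_one_mul_ofReal_exp_sub_exp {c d : ℝ} (hc : 0 ≤ c) (hd1 : d < 1) (y : ℝ) :
    exponentialPDF 1 y * ENNReal.ofReal (exp (-(c + d * y)) - exp (-y)) =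
      (Ioi (c / (1 - d))).indicator
        (fun y ↦ ENNReal.ofReal (exp (-c) * exp (-(1 + d) * y) - exp (-2 * y))) y := by
  have h1d : 0 < 1 - d := by linarith
  rcases lt_or_ge y 0 with hy | hy
  · rw [exponentialPDF_of_neg hy, zero_mul, indicator_of_notMem]
    exact not_lt.mpr (hy.le.trans (div_nonneg hc h1d.le))
  rw [exponentialPDF_of_nonneg hy, one_mul, one_mul, ← ENNReal.ofReal_mul (by positivity)]
  by_cases hy₀ : y ∈ Ioi (c / (1 - d))
  · rw [indicator_of_mem hy₀, mul_sub, ← exp_add, ← exp_add, ← exp_add]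
    ring_nf
  · have hle : y ≤ c + d * y := by
      have := (le_div_iff₀ h1d).mp (not_lt.mp hy₀)
      linarith
    rw [indicator_of_notMem hy₀, ENNReal.ofReal_eq_zero]
    exact mul_nonpos_of_nonneg_of_nonpos (exp_pos _).le
      (sub_nonpos.mpr (exp_le_exp.mpr (neg_le_neg hle)))

lemma lintegral_expMeasure_Ioc_add_mul {c d : ℝ} (hc : 0 ≤ c) (hd0 : 0 ≤ d) (hd1 : d < 1) :
    ∫⁻ y, expMeasure 1 (Ioc (c + d * y) y) ∂expMeasure 1 =
      ENNReal.ofReal ((1 - d) / (2 * (1 + d)) * exp (-(2 * c / (1 - d)))) := by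
  have hslice : ∀ᵐ y ∂expMeasure 1, expMeasure 1 (Ioc (c + d * y) y) =
      ENNReal.ofReal (exp (-(c + d * y)) - exp (-y)) := by
    have hpos : ∀ᵐ y ∂expMeasure 1, 0 ≤ y := by
      refine ae_iff.mpr ?_
      simp only [not_le]
      exact expMeasure_Iio_zero one_pos
    filter_upwards [hpos] with y hy
    rw [expMeasure_Ioc one_pos (by positivity) hy, one_mul, one_mul]
  have hint : IntegrableOn (fun y ↦ exp (-c) * exp (-(1 + d) * y) - exp (-2 * y))
      (Ioi (c / (1 - d))) :=
    ((exp_neg_integrableOn_Ioi _ (by linarith)).const_mul _).sub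
      (exp_neg_integrableOn_Ioi _ two_pos)
  have hnonneg : ∀ᵐ y ∂volume.restrict (Ioi (c / (1 - d))),
      0 ≤ exp (-c) * exp (-(1 + d) * y) - exp (-2 * y) := by
    refine (ae_restrict_iff' measurableSet_Ioi).mpr (ae_of_all _ fun y hy ↦ ?_)
    have := (div_lt_iff₀ (sub_pos.mpr hd1)).mp hy
    rw [sub_nonneg, ← exp_add, exp_le_exp]
    linarith
  have hpdf : Measurable (exponentialPDF 1) := (measurable_exponentialPDFReal 1).ennreal_ofReal
  rw [lintegral_congr_ae hslice, expMeasure_eq_withDensity,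
    lintegral_withDensity_eq_lintegral_mul _ hpdf (by fun_prop)]
  simp only [Pi.mul_apply, exponentialPDF_one_mul_ofReal_exp_sub_exp hc hd1]
  rw [lintegral_indicator measurableSet_Ioi, ← ofReal_integral_eq_lintegral_ofReal hint hnonneg,
    integral_exp_neg_mul_sub_exp_neg_two_mul_Ioi (by linarith) hd1.ne]

lemma expMeasure_prod_add_mul_max_lt_min {c d : ℝ} (hc : 0 ≤ c) (hd0 : 0 ≤ d) (hd1 : d < 1) :
    (expMeasure 1).prod (expMeasure 1) {p : ℝ × ℝ | c + d * max p.1 p.2 < min p.1 p.2} =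
      ENNReal.ofReal ((1 - d) / (1 + d) * exp (-(2 * c / (1 - d)))) := by
  have := isProbabilityMeasure_expMeasure one_pos
  set A₁ : Set (ℝ × ℝ) := {p | p.1 ≤ p.2 ∧ c + d * p.2 < p.1}
  set A₂ : Set (ℝ × ℝ) := {p | p.2 < p.1 ∧ c + d * p.1 < p.2}
  have hsplit : {p : ℝ × ℝ | c + d * max p.1 p.2 < min p.1 p.2} = A₁ ∪ A₂ := by
    ext ⟨x, y⟩
    simp only [A₁, A₂, mem_union, mem_ofPred_eq]
    grind
  have hA₁ : MeasurableSet A₁ := by measurability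
  have hA₂ : MeasurableSet A₂ := by measurability
  have hdisj : Disjoint A₁ A₂ := disjoint_left.mpr fun _ h₁ h₂ ↦ h₂.1.not_ge h₁.1
  have h₁ : (expMeasure 1).prod (expMeasure 1) A₁ =
      ENNReal.ofReal ((1 - d) / (2 * (1 + d)) * exp (-(2 * c / (1 - d)))) := by
    rw [Measure.prod_apply_symm hA₁, ← lintegral_expMeasure_Ioc_add_mul hc hd0 hd1]
    congr with y
    congr 1
    ext x
    exact and_comm
  have h₂ : (expMeasure 1).prod (expMeasure 1) A₂ =
      ENNReal.ofReal ((1 - d) / (2 * (1 + d)) * exp (-(2 * c / (1 - d)))) := by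
    rw [Measure.prod_apply hA₂, ← lintegral_expMeasure_Ioc_add_mul hc hd0 hd1]
    congr with x
    rw [← measure_congr Ioo_ae_eq_Ioc]
    congr 1
    ext y
    exact and_comm
  have hK : 0 ≤ (1 - d) / (2 * (1 + d)) * exp (-(2 * c / (1 - d))) :=
    mul_nonneg (div_nonneg (by linarith) (by linarith)) (exp_pos _).le
  rw [hsplit, measure_union hdisj hA₂, h₁, h₂, ← ENNReal.ofReal_add hK hK]
  congr 1
  field_simp
  ring

lemma _root_.MeasureTheory.Measure.prod_add_mul_max_lt_min_eq_zero {μ ν : Measure ℝ} [SFinite ν]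
    (hμ : μ (Iio 0) = 0) {c d : ℝ} (hc : 0 ≤ c) (hd : 1 ≤ d) :
    μ.prod ν {p : ℝ × ℝ | c + d * max p.1 p.2 < min p.1 p.2} = 0 := by
  refine measure_mono_null (t := Iio 0 ×ˢ univ) ?_ (by rw [Measure.prod_prod, hμ, zero_mul])
  rintro ⟨x, y⟩ hp
  simp only [mem_prod, mem_Iio, mem_univ, and_true]
  by_contra! hx
  have hmax : 0 ≤ max x y := hx.trans (le_max_left _ _)
  have : max x y ≤ c + d * max x y := by nlinarith
  exact (hp.trans_le min_le_max).not_ge this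

lemma IndepFun.measure_preimage_prodMk_eq_lintegral {Ω α β : Type*} [MeasurableSpace Ω]
    [MeasurableSpace α] [MeasurableSpace β] {P : Measure Ω} [IsFiniteMeasure P]
    {X : Ω → α} {Y : Ω → β} (hX : Measurable X) (hY : Measurable Y) (hXY : IndepFun X Y P)
    {E : Set (α × β)} (hE : MeasurableSet E) :
    P ((fun ω ↦ (X ω, Y ω)) ⁻¹' E) = ∫⁻ ω, P.map X {x | (x, Y ω) ∈ E} ∂P := by
  rw [← Measure.map_apply (hX.prodMk hY) hE,
    (indepFun_iff_map_prod_eq_prod_map_map hX.aemeasurable hY.aemeasurable).mp hXY,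
    Measure.prod_apply_symm hE, lintegral_map (measurable_measure_prodMk_right hE) hY]
  rfl

end ProbabilityTheory

theorem noma_success_second_general {Ω : Type*} [MeasureSpace Ω]
    [IsProbabilityMeasure (ℙ : Measure Ω)]
    (h' h'' I : Ω → ℝ) (hm' : Measurable h') (hm'' : Measurable h'')
    (hmI : Measurable I)
    (hind12 : IndepFun h' h'' ℙ)
    (hindI : IndepFun (fun ω => (h' ω, h'' ω)) I ℙ)
    (hd' : Measure.map h' ℙ = expMeasure 1)
    (hd'' : Measure.map h'' ℙ = expMeasure 1)
    (hIpos : ∀ᵐ ω ∂ℙ, 0 ≤ I ω)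
    (θ μ : ℝ) (hθ : 0 ≤ θ) (hμ0 : 0 ≤ μ) :
    (θ * μ < 1 →
      (ℙ {ω | min (h' ω) (h'' ω) > θ * (I ω + μ * max (h' ω) (h'' ω))}).toReal =
        ((1 - θ * μ) / (1 + θ * μ)) * ∫ ω, Real.exp (-(2 * θ / (1 - θ * μ)) * I ω) ∂ℙ) ∧
    (1 ≤ θ * μ →
      (ℙ {ω | min (h' ω) (h'' ω) > θ * (I ω + μ * max (h' ω) (h'' ω))}).toReal = 0) := by
  have := isProbabilityMeasure_expMeasure one_pos
  have hlaw : Measure.map (fun ω ↦ (h' ω, h'' ω)) ℙ = (expMeasure 1).prod (expMeasure 1) := by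
    rw [(indepFun_iff_map_prod_eq_prod_map_map hm'.aemeasurable hm''.aemeasurable).mp hind12,
      hd', hd'']
  have hprob : ℙ {ω | min (h' ω) (h'' ω) > θ * (I ω + μ * max (h' ω) (h'' ω))} =
      ∫⁻ ω, (expMeasure 1).prod (expMeasure 1)
        {p | θ * I ω + θ * μ * max p.1 p.2 < min p.1 p.2} ∂ℙ := by
    have hE : MeasurableSet
        {q : (ℝ × ℝ) × ℝ | θ * (q.2 + μ * max q.1.1 q.1.2) < min q.1.1 q.1.2} :=
      measurableSet_lt (by fun_prop) (by fun_prop)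
    refine ((hlaw ▸ hindI.measure_preimage_prodMk_eq_lintegral (hm'.prodMk hm'') hmI hE).trans
      (lintegral_congr fun ω ↦ ?_))
    simp only [mem_ofPred_eq, mul_add, mul_assoc]
  refine ⟨fun hlt ↦ ?_, fun hge ↦ ?_⟩
  · have hslice : ∀ᵐ ω ∂ℙ, (expMeasure 1).prod (expMeasure 1)
        {p | θ * I ω + θ * μ * max p.1 p.2 < min p.1 p.2} =
        ENNReal.ofReal ((1 - θ * μ) / (1 + θ * μ) * exp (-(2 * θ / (1 - θ * μ)) * I ω)) := by
      filter_upwards [hIpos] with ω hω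
      rw [expMeasure_prod_add_mul_max_lt_min (mul_nonneg hθ hω) (mul_nonneg hθ hμ0) hlt]
      ring_nf
    have hnonneg : 0 ≤ᵐ[ℙ] fun ω ↦
        (1 - θ * μ) / (1 + θ * μ) * exp (-(2 * θ / (1 - θ * μ)) * I ω) :=
      ae_of_all _ fun ω ↦ mul_nonneg (div_nonneg (by linarith) (by nlinarith)) (exp_pos _).le
    rw [hprob, lintegral_congr_ae hslice, ← integral_const_mul,
      integral_eq_lintegral_of_nonneg_ae hnonneg (by fun_prop)]
  · have hslice : ∀ᵐ ω ∂ℙ, (expMeasure 1).prod (expMeasure 1)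
        {p | θ * I ω + θ * μ * max p.1 p.2 < min p.1 p.2} = 0 := by
      filter_upwards [hIpos] with ω hω
      exact Measure.prod_add_mul_max_lt_min_eq_zero (expMeasure_Iio_zero one_pos)
        (mul_nonneg hθ hω) hge
    rw [hprob, lintegral_congr_ae hslice, lintegral_zero, ENNReal.toReal_zero]

/-- Success probability of the second decoded MTD under 2-user NOMA with imperfect SIC. -/
theorem noma_success_second {Ω : Type*} [MeasureSpace Ω]
    [IsProbabilityMeasure (ℙ : Measure Ω)]
    (h' h'' I : Ω → ℝ) (hm' : Measurable h') (hm'' : Measurable h'')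
    (hmI : Measurable I)
    (hind12 : IndepFun h' h'' ℙ)
    (hindI : IndepFun (fun ω => (h' ω, h'' ω)) I ℙ)
    (hd' : Measure.map h' ℙ = expMeasure 1)
    (hd'' : Measure.map h'' ℙ = expMeasure 1)
    (hIpos : ∀ᵐ ω ∂ℙ, 0 ≤ I ω)
    (θ μ : ℝ) (hθ : 0 ≤ θ) (hμ0 : 0 ≤ μ) (hμ1 : μ ≤ 1) :
    (θ * μ < 1 →
      (ℙ {ω | min (h' ω) (h'' ω) > θ * (I ω + μ * max (h' ω) (h'' ω))}).toReal =
        ((1 - θ * μ) / (1 + θ * μ)) * ∫ ω, Real.exp (-(2 * θ / (1 - θ * μ)) * I ω) ∂ℙ) ∧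
    (1 ≤ θ * μ →
      (ℙ {ω | min (h' ω) (h'' ω) > θ * (I ω + μ * max (h' ω) (h'' ω))}).toReal = 0) :=
  noma_success_second_general h' h'' I hm' hm'' hmI hind12 hindI hd' hd'' hIpos θ μ hθ hμ0
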